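/- Let G be a finite simple graph with at least two vertices that is not the disjoint union of two complete graphs, and let S = (s_0, s_1, s_2, …) be a binary sequence with at least two indices equal to 0. If τ is the second index with s_τ = 0, then for all t ≥ τ + 1, the graph ILM^t(S,G) is connected and has diameter exactly 3. -/

import Mathlib

open SimpleGraph

/-- Transitive step: each vertex `x` gets a clone `x'` adjacent to the closed
neighborhood of `x`. Original vertices are `Sum.inl`, clones are `Sum.inr`. -/
def LTstep {V : Type} (G : SimpleGraph V) : SimpleGraph (V ⊕ V) where
  Adj x y :=
    match x, y with
    | Sum.inl a, Sum.inl b => G.Adj a b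
    | Sum.inl a, Sum.inr b => a = b ∨ G.Adj a b
    | Sum.inr a, Sum.inl b => b = a ∨ G.Adj b a
    | Sum.inr _, Sum.inr _ => False
  symm := ⟨by
    rintro (a|a) (b|b) h
    · exact h.symm
    · exact h
    · exact h
    · exact h.elim⟩
  loopless := ⟨by
    rintro (a|a) h
    · exact G.irrefl h
    · exact h⟩

/-- Anti-transitive step: each vertex `x` gets an anti-clone `x*` adjacent to the
complement of the closed neighborhood of `x`. -/
def LATstep {V : Type} (G : SimpleGraph V) : SimpleGraph (V ⊕ V) where
  Adj x y :=
    match x, y with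
    | Sum.inl a, Sum.inl b => G.Adj a b
    | Sum.inl a, Sum.inr b => a ≠ b ∧ ¬ G.Adj a b
    | Sum.inr a, Sum.inl b => b ≠ a ∧ ¬ G.Adj b a
    | Sum.inr _, Sum.inr _ => False
  symm := ⟨by
    rintro (a|a) (b|b) h
    · exact h.symm
    · exact h
    · exact h
    · exact h.elim⟩
  loopless := ⟨by
    rintro (a|a) h
    · exact G.irrefl h
    · exact h⟩

/-- The vertex type of the `t`-th iterated local model graph. -/
def ILMVertex (V : Type) : ℕ → Type
  | 0 => V
  | t + 1 => ILMVertex V t ⊕ ILMVertex V t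

instance ILMVertex.fintype {V : Type} [Fintype V] : ∀ t, Fintype (ILMVertex V t)
  | 0 => inferInstanceAs (Fintype V)
  | t + 1 =>
    letI := ILMVertex.fintype (V := V) t
    inferInstanceAs (Fintype (ILMVertex V t ⊕ ILMVertex V t))

instance ILMVertex.nonempty {V : Type} [Nonempty V] : ∀ t, Nonempty (ILMVertex V t)
  | 0 => inferInstanceAs (Nonempty V)
  | t + 1 =>
    letI := ILMVertex.nonempty (V := V) t
    inferInstanceAs (Nonempty (ILMVertex V t ⊕ ILMVertex V t))

/-- The iterated local model: at step `t` apply a transitive step if `S t = true`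
(i.e. `s_t = 1`) and an anti-transitive step if `S t = false` (i.e. `s_t = 0`). -/
def ILM {V : Type} (S : ℕ → Bool) (G : SimpleGraph V) : (t : ℕ) → SimpleGraph (ILMVertex V t)
  | 0 => G
  | t + 1 => if S t then LTstep (ILM S G t) else LATstep (ILM S G t)


namespace ILMAux

open SimpleGraph

variable {V : Type}

/-- membership in the closed neighborhood -/
def CN (H : SimpleGraph V) (u c : V) : Prop := u = c ∨ H.Adj u c

lemma CN.refl (H : SimpleGraph V) (u : V) : CN H u u := Or.inl rfl

lemma CN.symm {H : SimpleGraph V} {u c : V} (h : CN H u c) : CN H c u :=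
  h.imp Eq.symm SimpleGraph.Adj.symm

lemma not_CN_symm {H : SimpleGraph V} {u c : V} (h : ¬ CN H u c) : ¬ CN H c u :=
  fun h' => h h'.symm

/-- The conclusion of the main invariant for a pair of vertices. -/
def Wc (H : SimpleGraph V) (u v : V) : Prop :=
  (∀ c, ¬ (CN H u c ∧ CN H v c)) ∧ ∃ c d, H.Adj c d ∧ ¬ CN H u c ∧ ¬ CN H v d

lemma Wc.symm {H : SimpleGraph V} {u v : V} (h : Wc H u v) : Wc H v u := by
  obtain ⟨h1, c, d, hcd, hc, hd⟩ := h
  exact ⟨fun e he => h1 e ⟨he.2, he.1⟩, d, c, hcd.symm, hd, hc⟩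

/-- The main invariant: whenever two closed neighborhoods cover everything, they are
disjoint and there is a crossing edge. -/
def W (H : SimpleGraph V) : Prop :=
  ∀ u v : V, (∀ c, CN H u c ∨ CN H v c) → Wc H u v

lemma W.exists_not_CN {H : SimpleGraph V} (hW : W H) (u : V) : ∃ c, ¬ CN H u c := by
  by_contra h
  push_neg at h
  exact (hW u u (fun c => Or.inl (h c))).1 u ⟨CN.refl H u, CN.refl H u⟩

lemma W.not_small {H : SimpleGraph V} (hW : W H) (x y : V) (hall : ∀ z, z = x ∨ z = y) :
    False := by
  obtain ⟨c, hc⟩ := hW.exists_not_CN x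
  have hcy : c = y := (hall c).resolve_left (fun h => hc (Or.inl h.symm))
  subst hcy
  have hcov : ∀ z, CN H x z ∨ CN H c z := by
    intro z
    rcases hall z with rfl | rfl
    · exact Or.inl (CN.refl H z)
    · exact Or.inr (CN.refl H z)
  obtain ⟨_, e, d, hed, he, hd⟩ := hW x c hcov
  have he' : e = c := (hall e).resolve_left (fun h => he (Or.inl h.symm))
  have hd' : d = x := (hall d).resolve_right (fun h => hd (Or.inl h.symm))
  rw [he', hd'] at hed
  exact hc (Or.inr hed.symm)

section AdjLemmas

variable (H : SimpleGraph V) (a b : V)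

lemma LT_adj_ll : (LTstep H).Adj (Sum.inl a) (Sum.inl b) ↔ H.Adj a b := Iff.rfl
lemma LT_adj_lr : (LTstep H).Adj (Sum.inl a) (Sum.inr b) ↔ (a = b ∨ H.Adj a b) := Iff.rfl
lemma LT_adj_rl : (LTstep H).Adj (Sum.inr a) (Sum.inl b) ↔ (b = a ∨ H.Adj b a) := Iff.rfl
lemma LAT_adj_ll : (LATstep H).Adj (Sum.inl a) (Sum.inl b) ↔ H.Adj a b := Iff.rfl
lemma LAT_adj_lr : (LATstep H).Adj (Sum.inl a) (Sum.inr b) ↔ (a ≠ b ∧ ¬ H.Adj a b) := Iff.rfl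
lemma LAT_adj_rl : (LATstep H).Adj (Sum.inr a) (Sum.inl b) ↔ (b ≠ a ∧ ¬ H.Adj b a) := Iff.rfl

lemma CN_LT_ll : CN (LTstep H) (Sum.inl a) (Sum.inl b) ↔ CN H a b := by
  unfold CN
  exact or_congr (by simp) Iff.rfl

lemma CN_LT_lr : CN (LTstep H) (Sum.inl a) (Sum.inr b) ↔ CN H a b := by
  unfold CN
  constructor
  · rintro (h | h)
    · exact absurd h (by simp)
    · exact h
  · exact Or.inr

lemma CN_LT_rl : CN (LTstep H) (Sum.inr a) (Sum.inl b) ↔ CN H a b := by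
  unfold CN
  constructor
  · rintro (h | h | h)
    · exact absurd h (by simp)
    · exact Or.inl h.symm
    · exact Or.inr h.symm
  · rintro (rfl | h)
    · exact Or.inr (Or.inl rfl)
    · exact Or.inr (Or.inr h.symm)

lemma CN_LT_rr : CN (LTstep H) (Sum.inr a) (Sum.inr b) ↔ a = b := by
  unfold CN
  constructor
  · rintro (h | h)
    · exact Sum.inr.inj h
    · exact h.elim
  · rintro rfl
    exact Or.inl rfl

lemma CN_LAT_ll : CN (LATstep H) (Sum.inl a) (Sum.inl b) ↔ CN H a b := by
  unfold CN
  exact or_congr (by simp) Iff.rfl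

lemma CN_LAT_lr : CN (LATstep H) (Sum.inl a) (Sum.inr b) ↔ ¬ CN H a b := by
  unfold CN
  constructor
  · rintro (h | ⟨h1, h2⟩)
    · exact absurd h (by simp)
    · rintro (h3 | h3)
      · exact h1 h3
      · exact h2 h3
  · intro h
    push_neg at h
    exact Or.inr ⟨h.1, h.2⟩

lemma CN_LAT_rl : CN (LATstep H) (Sum.inr a) (Sum.inl b) ↔ ¬ CN H a b := by
  unfold CN
  constructor
  · rintro (h | ⟨h1, h2⟩)
    · exact absurd h (by simp)
    · rintro (h3 | h3)
      · exact h1 h3.symm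
      · exact h2 h3.symm
  · intro h
    push_neg at h
    exact Or.inr ⟨fun e => h.1 e.symm, fun e => h.2 e.symm⟩

lemma CN_LAT_rr : CN (LATstep H) (Sum.inr a) (Sum.inr b) ↔ a = b := by
  unfold CN
  constructor
  · rintro (h | h)
    · exact Sum.inr.inj h
    · exact h.elim
  · rintro rfl
    exact Or.inl rfl

end AdjLemmas

/-- Adjacency constructors for LAT. -/
lemma adjLL {H : SimpleGraph V} {a b : V} (h : H.Adj a b) :
    (LATstep H).Adj (Sum.inl a) (Sum.inl b) := h

lemma adjLR {H : SimpleGraph V} {a x : V} (h : ¬ CN H x a) :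
    (LATstep H).Adj (Sum.inl a) (Sum.inr x) :=
  (LAT_adj_lr H a x).mpr ⟨fun e => h (Or.inl e.symm), fun e => h (Or.inr e.symm)⟩

lemma adjRL {H : SimpleGraph V} {x a : V} (h : ¬ CN H x a) :
    (LATstep H).Adj (Sum.inr x) (Sum.inl a) :=
  (LAT_adj_rl H x a).mpr ⟨fun e => h (Or.inl e.symm), fun e => h (Or.inr e.symm)⟩

/-- Walks of length ≤ 3 from explicit edges. -/
lemma walk1 {α : Type} {G : SimpleGraph α} {u v : α} (h : G.Adj u v) :
    ∃ p : G.Walk u v, p.length ≤ 3 :=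
  ⟨SimpleGraph.Walk.cons h SimpleGraph.Walk.nil, by
    simp only [SimpleGraph.Walk.length_cons, SimpleGraph.Walk.length_nil]; omega⟩

lemma walk2 {α : Type} {G : SimpleGraph α} {u w v : α} (h1 : G.Adj u w) (h2 : G.Adj w v) :
    ∃ p : G.Walk u v, p.length ≤ 3 :=
  ⟨SimpleGraph.Walk.cons h1 (SimpleGraph.Walk.cons h2 SimpleGraph.Walk.nil), by
    simp only [SimpleGraph.Walk.length_cons, SimpleGraph.Walk.length_nil]; omega⟩

lemma walk3 {α : Type} {G : SimpleGraph α} {u w x v : α} (h1 : G.Adj u w) (h2 : G.Adj w x)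
    (h3 : G.Adj x v) : ∃ p : G.Walk u v, p.length ≤ 3 :=
  ⟨SimpleGraph.Walk.cons h1 (SimpleGraph.Walk.cons h2
      (SimpleGraph.Walk.cons h3 SimpleGraph.Walk.nil)), by
    simp only [SimpleGraph.Walk.length_cons, SimpleGraph.Walk.length_nil]; omega⟩

end ILMAux

namespace ILMAux

open SimpleGraph

variable {V : Type}

/-- If the vertex set splits into two cliques with no crossing edges, then the graph
is a disjoint union of two complete graphs. -/
lemma two_cliques_prop (H : SimpleGraph V) (A : V → Prop) (a b : V) (ha : A a) (hb : ¬ A b)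
    (hclA : ∀ u v, A u → A v → CN H u v)
    (hclB : ∀ u v, ¬ A u → ¬ A v → CN H u v)
    (hcross : ∀ u v, A u → ¬ A v → ¬ H.Adj u v) :
    Nat.card H.ConnectedComponent = 2 ∧ ∀ u v : V, H.Reachable u v → u = v ∨ H.Adj u v := by
  have hadj : ∀ u v : V, H.Adj u v → (A u ↔ A v) := by
    intro u v huv
    constructor
    · intro hu
      by_contra hv
      exact hcross u v hu hv huv
    · intro hv
      by_contra hu
      exact hcross v u hv hu huv.symm
  have hside : ∀ u v : V, H.Reachable u v → (A u ↔ A v) := by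
    intro u v h
    obtain ⟨p⟩ := h
    induction p with
    | nil => exact Iff.rfl
    | cons h p ih => exact (hadj _ _ h).trans ih
  have hCNreach : ∀ u v : V, CN H u v → H.Reachable u v := by
    intro u v h
    rcases h with rfl | h
    · exact SimpleGraph.Reachable.refl u
    · exact h.reachable
  have hreach : ∀ u v : V, H.Reachable u v → u = v ∨ H.Adj u v := by
    intro u v h
    by_cases hu : A u
    · exact hclA u v hu ((hside u v h).mp hu)
    · exact hclB u v hu (fun hv => hu ((hside u v h).mpr hv))
  refine ⟨?_, hreach⟩
  rw [Nat.card_eq_two_iff]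
  refine ⟨H.connectedComponentMk a, H.connectedComponentMk b, ?_, ?_⟩
  · intro h
    exact hb ((hside a b (SimpleGraph.ConnectedComponent.exact h)).mp ha)
  · apply Set.eq_univ_of_forall
    intro c
    induction c using SimpleGraph.ConnectedComponent.ind with | h v => ?_
    simp only [Set.mem_insert_iff, Set.mem_singleton_iff]
    by_cases hv : A v
    · left
      exact SimpleGraph.ConnectedComponent.sound (hCNreach v a (hclA v a hv ha))
    · right
      exact SimpleGraph.ConnectedComponent.sound (hCNreach v b (hclB v b hv hb))

/-- The base lemma: if `H` is not a disjoint union of two complete graphs, then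
`LAT(H)` satisfies the invariant `W`. -/
lemma W_LAT_base (H : SimpleGraph V) (hnt : Nontrivial V)
    (hG : ¬ (Nat.card H.ConnectedComponent = 2 ∧
      ∀ u v : V, H.Reachable u v → u = v ∨ H.Adj u v)) :
    W (LATstep H) := by
  classical
  have case_ll : ∀ a b : V,
      (∀ c, CN (LATstep H) (Sum.inl a) c ∨ CN (LATstep H) (Sum.inl b) c) →
      Wc (LATstep H) (Sum.inl a) (Sum.inl b) := by
    intro a b hcov
    have h1 : ∀ c : V, CN H a c ∨ CN H b c := by
      intro c
      have := hcov (Sum.inl c)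
      rwa [CN_LAT_ll, CN_LAT_ll] at this
    have h2 : ∀ z : V, ¬ CN H a z ∨ ¬ CN H b z := by
      intro z
      have := hcov (Sum.inr z)
      rwa [CN_LAT_lr, CN_LAT_lr] at this
    constructor
    · rintro (c | z) ⟨hc1, hc2⟩
      · rw [CN_LAT_ll] at hc1 hc2
        rcases h2 c with h | h
        · exact h hc1
        · exact h hc2
      · rw [CN_LAT_lr] at hc1 hc2
        rcases h1 z with h | h
        · exact hc1 h
        · exact hc2 h
    · by_contra hno
      push_neg at hno
      have opt1 : ∀ e f : V, H.Adj e f → ¬ CN H a e → CN H b f := by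
        intro e f hef hae
        have := hno (Sum.inl e) (Sum.inl f) hef (by rw [CN_LAT_ll]; exact hae)
        rwa [CN_LAT_ll] at this
      have opt2 : ∀ e z : V, ¬ CN H a e → CN H b z → CN H z e := by
        intro e z hae hbz
        by_contra hze
        have hadj : (LATstep H).Adj (Sum.inl e) (Sum.inr z) :=
          (LAT_adj_lr H e z).mpr ⟨fun h => hze (Or.inl h.symm), fun h => hze (Or.inr h.symm)⟩
        have := hno (Sum.inl e) (Sum.inr z) hadj (by rw [CN_LAT_ll]; exact hae)
        rw [CN_LAT_lr] at this
        exact this hbz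
      have opt3 : ∀ z f : V, CN H a z → ¬ CN H b f → CN H z f := by
        intro z f haz hbf
        by_contra hzf
        have hadj : (LATstep H).Adj (Sum.inr z) (Sum.inl f) :=
          (LAT_adj_rl H z f).mpr ⟨fun h => hzf (Or.inl h.symm), fun h => hzf (Or.inr h.symm)⟩
        have := hno (Sum.inr z) (Sum.inl f) hadj (by rw [CN_LAT_lr]; exact not_not_intro haz)
        rw [CN_LAT_ll] at this
        exact hbf this
      have hb : ¬ CN H a b := (h2 b).resolve_right (not_not_intro (CN.refl H b))
      refine hG (two_cliques_prop H (fun x => CN H a x) a b (CN.refl H a) hb ?_ ?_ ?_)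
      · intro u v hu hv
        exact opt3 u v hu ((h2 v).resolve_left (not_not_intro hv))
      · intro u v hu hv
        exact opt2 v u hv ((h1 u).resolve_left hu)
      · intro u v hu hv huv
        have := opt1 v u huv.symm hv
        rcases h2 u with h | h
        · exact h hu
        · exact h this
  have case_lr : ∀ a x : V,
      (∀ c, CN (LATstep H) (Sum.inl a) c ∨ CN (LATstep H) (Sum.inr x) c) →
      Wc (LATstep H) (Sum.inl a) (Sum.inr x) := by
    intro a x hcov
    have hax : x = a := by
      have := hcov (Sum.inr a)
      rw [CN_LAT_lr, CN_LAT_rr] at this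
      exact this.resolve_left (not_not_intro (CN.refl H a))
    have hax' : a = x := hax.symm
    subst hax'
    have hiso : ∀ z, z ≠ a → ¬ CN H a z := by
      intro z hz
      have := hcov (Sum.inr z)
      rw [CN_LAT_lr, CN_LAT_rr] at this
      exact this.resolve_right (fun h => hz h.symm)
    constructor
    · rintro (c | z) ⟨hc1, hc2⟩
      · rw [CN_LAT_ll] at hc1
        rw [CN_LAT_rl] at hc2
        exact hc2 hc1
      · rw [CN_LAT_lr] at hc1
        rw [CN_LAT_rr] at hc2
        exact hc1 (hc2 ▸ CN.refl H a)
    · by_contra hno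
      push_neg at hno
      have hkey : ∀ e z : V, e ≠ a → z ≠ a → CN H z e := by
        intro e z he hz
        by_contra hze
        have hadj : (LATstep H).Adj (Sum.inl e) (Sum.inr z) :=
          (LAT_adj_lr H e z).mpr ⟨fun h => hze (Or.inl h.symm), fun h => hze (Or.inr h.symm)⟩
        have := hno (Sum.inl e) (Sum.inr z) hadj (by rw [CN_LAT_ll]; exact hiso e he)
        rw [CN_LAT_rr] at this
        exact hz this.symm
      haveI := hnt
      obtain ⟨b, hb⟩ := exists_ne a
      refine hG (two_cliques_prop H (fun v => v = a) a b rfl hb ?_ ?_ ?_)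
      · intro u v hu hv
        rw [hu, hv]
        exact CN.refl H a
      · intro u v hu hv
        exact hkey v u hv hu
      · intro u v hu hv hadj
        rw [hu] at hadj
        exact hiso v hv (Or.inr hadj)
  have case_rr : ∀ x y : V,
      (∀ c, CN (LATstep H) (Sum.inr x) c ∨ CN (LATstep H) (Sum.inr y) c) →
      Wc (LATstep H) (Sum.inr x) (Sum.inr y) := by
    intro x y hcov
    exfalso
    have hall : ∀ z : V, z = x ∨ z = y := by
      intro z
      have := hcov (Sum.inr z)
      rw [CN_LAT_rr, CN_LAT_rr] at this
      exact this.imp Eq.symm Eq.symm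
    have hxy : ¬ CN H y x := by
      have := hcov (Sum.inl x)
      rw [CN_LAT_rl, CN_LAT_rl] at this
      rcases this with h | h
      · exact absurd (CN.refl H x) h
      · exact h
    have hxny : x ≠ y := fun h => hxy (Or.inl h.symm)
    refine hG (two_cliques_prop H (fun v => v = x) x y rfl hxny.symm ?_ ?_ ?_)
    · intro u v hu hv
      rw [hu, hv]
      exact CN.refl H x
    · intro u v hu hv
      have hu' : u = y := (hall u).resolve_left hu
      have hv' : v = y := (hall v).resolve_left hv
      rw [hu', hv']
      exact CN.refl H y
    · intro u v hu hv hadj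
      rw [hu, (hall v).resolve_left hv] at hadj
      exact hxy (Or.inr hadj.symm)
  intro u v hcov
  match u, v with
  | Sum.inl a, Sum.inl b => exact case_ll a b hcov
  | Sum.inl a, Sum.inr x => exact case_lr a x hcov
  | Sum.inr x, Sum.inl a => exact (case_lr a x (fun c => (hcov c).symm)).symm
  | Sum.inr x, Sum.inr y => exact case_rr x y hcov

end ILMAux

namespace ILMAux
open SimpleGraph
variable {V : Type}

/-- LT preserves the invariant. -/
lemma W.LT {H : SimpleGraph V} (hW : W H) : W (LTstep H) := by
  have aux : ∀ a x : V, (∀ z : V, CN H a z ∨ x = z) → False := by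
    intro a x hz
    by_cases hax : CN H a x
    · have hall : ∀ z, CN H a z := by
        intro z
        rcases hz z with h | h
        · exact h
        · exact h ▸ hax
      exact (hW a a (fun c => Or.inl (hall c))).1 a ⟨CN.refl H a, CN.refl H a⟩
    · have hcov : ∀ c, CN H a c ∨ CN H x c := by
        intro c
        rcases hz c with h | h
        · exact Or.inl h
        · exact Or.inr (Or.inl h)
      obtain ⟨_, c, d, hcd, hc, hd⟩ := hW a x hcov
      have hxc : x = c := (hz c).resolve_left hc
      subst hxc
      exact hd (Or.inr hcd)
  intro u v hcov
  match u, v with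
  | Sum.inl a, Sum.inl b =>
    have h1 : ∀ c : V, CN H a c ∨ CN H b c := by
      intro c
      have := hcov (Sum.inl c)
      rwa [CN_LT_ll, CN_LT_ll] at this
    obtain ⟨hdisj, c, d, hcd, hc, hd⟩ := hW a b h1
    constructor
    · rintro (e | z) ⟨he1, he2⟩
      · rw [CN_LT_ll] at he1 he2
        exact hdisj e ⟨he1, he2⟩
      · rw [CN_LT_lr] at he1 he2
        exact hdisj z ⟨he1, he2⟩
    · exact ⟨Sum.inl c, Sum.inl d, hcd,
        by rw [CN_LT_ll]; exact hc, by rw [CN_LT_ll]; exact hd⟩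
  | Sum.inl a, Sum.inr x =>
    exfalso
    apply aux a x
    intro z
    have := hcov (Sum.inr z)
    rwa [CN_LT_lr, CN_LT_rr] at this
  | Sum.inr x, Sum.inl a =>
    exfalso
    apply aux a x
    intro z
    have := hcov (Sum.inr z)
    rw [CN_LT_rr, CN_LT_lr] at this
    exact this.symm
  | Sum.inr x, Sum.inr y =>
    exfalso
    apply hW.not_small x y
    intro z
    have := hcov (Sum.inr z)
    rw [CN_LT_rr, CN_LT_rr] at this
    exact this.imp Eq.symm Eq.symm

/-- LAT preserves the invariant. -/
lemma W.LAT {H : SimpleGraph V} (hW : W H) : W (LATstep H) := by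
  have case_lr : ∀ a x : V,
      (∀ c, CN (LATstep H) (Sum.inl a) c ∨ CN (LATstep H) (Sum.inr x) c) →
      Wc (LATstep H) (Sum.inl a) (Sum.inr x) := by
    intro a x hcov
    have hax : x = a := by
      have := hcov (Sum.inr a)
      rw [CN_LAT_lr, CN_LAT_rr] at this
      exact this.resolve_left (not_not_intro (CN.refl H a))
    have hax' : a = x := hax.symm
    subst hax'
    have hiso : ∀ z, z ≠ a → ¬ CN H a z := by
      intro z hz
      have := hcov (Sum.inr z)
      rw [CN_LAT_lr, CN_LAT_rr] at this
      exact this.resolve_right (fun h => hz h.symm)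
    constructor
    · rintro (c | z) ⟨hc1, hc2⟩
      · rw [CN_LAT_ll] at hc1
        rw [CN_LAT_rl] at hc2
        exact hc2 hc1
      · rw [CN_LAT_lr] at hc1
        rw [CN_LAT_rr] at hc2
        exact hc1 (hc2 ▸ CN.refl H a)
    · by_contra hno
      push_neg at hno
      have hkey : ∀ e z : V, e ≠ a → z ≠ a → CN H z e := by
        intro e z he hz
        by_contra hze
        have hadj : (LATstep H).Adj (Sum.inl e) (Sum.inr z) :=
          (LAT_adj_lr H e z).mpr ⟨fun h => hze (Or.inl h.symm), fun h => hze (Or.inr h.symm)⟩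
        have := hno (Sum.inl e) (Sum.inr z) hadj (by rw [CN_LAT_ll]; exact hiso e he)
        rw [CN_LAT_rr] at this
        exact hz this.symm
      have hz0 : ∃ z0 : V, z0 ≠ a := by
        by_contra h
        push_neg at h
        exact hW.not_small a a (fun z => Or.inl (h z))
      obtain ⟨z0, hz0⟩ := hz0
      have hcov2 : ∀ c, CN H a c ∨ CN H z0 c := by
        intro c
        by_cases hc : c = a
        · exact Or.inl (Or.inl hc.symm)
        · exact Or.inr (hkey c z0 hc hz0)
      obtain ⟨_, c, d, hcd, hc, hd⟩ := hW a z0 hcov2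
      have hd' : d = a := by
        by_contra h
        exact hd (hkey d z0 h hz0)
      subst hd'
      exact hc (Or.inr hcd.symm)
  intro u v hcov
  match u, v with
  | Sum.inl a, Sum.inl b =>
    have h1 : ∀ c : V, CN H a c ∨ CN H b c := by
      intro c
      have := hcov (Sum.inl c)
      rwa [CN_LAT_ll, CN_LAT_ll] at this
    obtain ⟨hdisj, c, d, hcd, hc, hd⟩ := hW a b h1
    constructor
    · rintro (e | z) ⟨he1, he2⟩
      · rw [CN_LAT_ll] at he1 he2
        exact hdisj e ⟨he1, he2⟩
      · rw [CN_LAT_lr] at he1 he2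
        rcases h1 z with h | h
        · exact he1 h
        · exact he2 h
    · exact ⟨Sum.inl c, Sum.inl d, hcd,
        by rw [CN_LAT_ll]; exact hc, by rw [CN_LAT_ll]; exact hd⟩
  | Sum.inl a, Sum.inr x => exact case_lr a x hcov
  | Sum.inr x, Sum.inl a => exact (case_lr a x (fun c => (hcov c).symm)).symm
  | Sum.inr x, Sum.inr y =>
    exfalso
    apply hW.not_small x y
    intro z
    have := hcov (Sum.inr z)
    rw [CN_LAT_rr, CN_LAT_rr] at this
    exact this.imp Eq.symm Eq.symm

/-- All pairs in LAT(H) are within distance 3 when W(H) holds. -/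
lemma exists_LAT_walk {H : SimpleGraph V} (hW : W H) :
    ∀ u v : V ⊕ V, ∃ p : (LATstep H).Walk u v, p.length ≤ 3 := by
  classical
  have caseA : ∀ a b : V, ∃ p : (LATstep H).Walk (Sum.inl a) (Sum.inl b), p.length ≤ 3 := by
    intro a b
    by_cases hcov : ∀ c, CN H a c ∨ CN H b c
    · obtain ⟨hdisj, c, d, hcd, hc, hd⟩ := hW a b hcov
      have had : CN H a d := (hcov d).resolve_right hd
      have hbc : CN H b c := (hcov c).resolve_left hc
      rcases had with had | had <;> rcases hbc with hbc | hbc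
      · exact walk1 (adjLL (by rw [had, hbc]; exact hcd.symm))
      · exact walk2 (adjLL (by rw [had]; exact hcd.symm)) (adjLL hbc.symm)
      · exact walk2 (adjLL had) (adjLL (by rw [hbc]; exact hcd.symm))
      · exact walk3 (adjLL had) (adjLL hcd.symm) (adjLL hbc.symm)
    · push_neg at hcov
      obtain ⟨w, hw1, hw2⟩ := hcov
      exact walk2 (adjLR (not_CN_symm hw1)) (adjRL (not_CN_symm hw2))
  have caseB : ∀ a x : V, ∃ p : (LATstep H).Walk (Sum.inl a) (Sum.inr x), p.length ≤ 3 := by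
    intro a x
    by_cases hxa : CN H x a
    · obtain ⟨e0, he0⟩ := hW.exists_not_CN x
      by_cases hcov1 : ∀ c, CN H a c ∨ CN H e0 c
      · obtain ⟨hdisj, c, d, hcd, hc, hd⟩ := hW a e0 hcov1
        have had : CN H a d := (hcov1 d).resolve_right hd
        by_cases hxc : CN H x c
        · by_cases hcov2 : ∀ w, CN H c w ∨ CN H x w
          · exact ((hW c x hcov2).1 c ⟨CN.refl H c, hxc⟩).elim
          · push_neg at hcov2
            obtain ⟨w, hw1, hw2⟩ := hcov2
            exact walk3 (adjLR (not_CN_symm hc)) (adjRL hw1) (adjLR hw2)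
        · rcases had with had | had
          · exact walk2 (adjLL (by rw [had]; exact hcd.symm)) (adjLR hxc)
          · exact walk3 (adjLL had) (adjLL hcd.symm) (adjLR hxc)
      · push_neg at hcov1
        obtain ⟨w, hw1, hw2⟩ := hcov1
        exact walk3 (adjLR (not_CN_symm hw1)) (adjRL (not_CN_symm hw2)) (adjLR he0)
    · exact walk1 (adjLR hxa)
  have caseC : ∀ x y : V, ∃ p : (LATstep H).Walk (Sum.inr x) (Sum.inr y), p.length ≤ 3 := by
    intro x y
    by_cases hxy : x = y
    · subst hxy
      exact ⟨SimpleGraph.Walk.nil, by simp⟩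
    · by_cases hcov : ∀ c, CN H x c ∨ CN H y c
      · obtain ⟨hdisj, c, d, hcd, hc, hd⟩ := hW x y hcov
        exact walk3 (adjRL hc) (adjLL hcd) (adjLR hd)
      · push_neg at hcov
        obtain ⟨w, hw1, hw2⟩ := hcov
        exact walk2 (adjRL hw1) (adjLR hw2)
  intro u v
  match u, v with
  | Sum.inl a, Sum.inl b => exact caseA a b
  | Sum.inl a, Sum.inr x => exact caseB a x
  | Sum.inr x, Sum.inl a =>
    obtain ⟨p, hp⟩ := caseB a x
    exact ⟨p.reverse, by rwa [SimpleGraph.Walk.length_reverse]⟩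
  | Sum.inr x, Sum.inr y => exact caseC x y

end ILMAux

namespace ILMAux
open SimpleGraph
variable {V : Type}

lemma three_le_length {α : Type} {G : SimpleGraph α} {u v : α} (hne : u ≠ v)
    (hnadj : ¬ G.Adj u v) (hcom : ∀ w, ¬ (G.Adj u w ∧ G.Adj w v)) :
    ∀ p : G.Walk u v, 3 ≤ p.length := by
  intro p
  cases p with
  | nil => exact absurd rfl hne
  | cons h q =>
    cases q with
    | nil => exact absurd h hnadj
    | cons h2 r =>
      cases r with
      | nil => exact absurd ⟨h, h2⟩ (hcom _)
      | cons h3 s =>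
        simp only [SimpleGraph.Walk.length_cons]
        omega

lemma three_le_edist {α : Type} {G : SimpleGraph α} {u v : α} (hne : u ≠ v)
    (hnadj : ¬ G.Adj u v) (hcom : ∀ w, ¬ (G.Adj u w ∧ G.Adj w v)) :
    3 ≤ G.edist u v := by
  rw [SimpleGraph.edist_eq_sInf]
  apply le_sInf
  rintro b ⟨p, rfl⟩
  show (3 : ℕ∞) ≤ (p.length : ℕ∞)
  exact_mod_cast three_le_length hne hnadj hcom p

/-- The pair (a, a*) is at distance at least 3 in LAT(H). -/
lemma LAT_pair (H : SimpleGraph V) (a : V) :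
    3 ≤ (LATstep H).edist (Sum.inl a) (Sum.inr a) := by
  apply three_le_edist
  · simp
  · intro h
    exact h.1 rfl
  · rintro (c | z) ⟨h1, h2⟩
    · exact h2.2 h1.symm
    · exact h2

/-- The embedding of `H` into `LTstep H` as a graph homomorphism. -/
def inlHom (H : SimpleGraph V) : H →g LTstep H where
  toFun := Sum.inl
  map_rel' := fun h => h

lemma exists_walk_to_clone {H : SimpleGraph V} {a x : V} (p : H.Walk a x) :
    ∃ q : (LTstep H).Walk (Sum.inl a) (Sum.inr x), q.length ≤ max 1 p.length := by
  induction p with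
  | nil =>
    refine ⟨SimpleGraph.Walk.cons ?_ SimpleGraph.Walk.nil, ?_⟩
    · exact Or.inl rfl
    · exact le_refl 1
  | @cons a b x h p ih =>
    by_cases hax : CN H a x
    · refine ⟨SimpleGraph.Walk.cons ?_ SimpleGraph.Walk.nil, ?_⟩
      · exact hax
      · simp only [SimpleGraph.Walk.length_cons, SimpleGraph.Walk.length_nil]
        exact le_max_left 1 _
    · obtain ⟨q, hq⟩ := ih
      have hp1 : 1 ≤ p.length := by
        rcases Nat.eq_zero_or_pos p.length with h0 | h1
        · exact absurd (Or.inr ((SimpleGraph.Walk.eq_of_length_eq_zero h0) ▸ h)) hax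
        · exact h1
      refine ⟨SimpleGraph.Walk.cons ?_ q, ?_⟩
      · exact h
      · rw [max_eq_right hp1] at hq
        simp only [SimpleGraph.Walk.length_cons]
        rw [max_eq_right (by omega : 1 ≤ p.length + 1)]
        show q.length + 1 ≤ _
        omega

lemma exists_LT_walk {H : SimpleGraph V}
    (hw : ∀ u v : V, ∃ p : H.Walk u v, p.length ≤ 3) :
    ∀ u v : V ⊕ V, ∃ q : (LTstep H).Walk u v, q.length ≤ 3 := by
  have caseLR : ∀ a x : V, ∃ q : (LTstep H).Walk (Sum.inl a) (Sum.inr x), q.length ≤ 3 := by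
    intro a x
    obtain ⟨p, hp⟩ := hw a x
    obtain ⟨q, hq⟩ := exists_walk_to_clone p
    exact ⟨q, hq.trans (max_le (by omega) hp)⟩
  intro u v
  match u, v with
  | Sum.inl a, Sum.inl b =>
    obtain ⟨p, hp⟩ := hw a b
    exact ⟨p.map (inlHom H), (SimpleGraph.Walk.length_map _ _).trans_le hp⟩
  | Sum.inl a, Sum.inr x => exact caseLR a x
  | Sum.inr x, Sum.inl a =>
    obtain ⟨q, hq⟩ := caseLR a x
    exact ⟨q.reverse, by rwa [SimpleGraph.Walk.length_reverse]⟩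
  | Sum.inr x, Sum.inr y =>
    by_cases hxy : x = y
    · subst hxy
      exact ⟨SimpleGraph.Walk.nil, by simp⟩
    · obtain ⟨p, hp⟩ := hw x y
      cases p with
      | nil => exact absurd rfl hxy
      | @cons _ b _ h p' =>
        obtain ⟨q, hq⟩ := exists_walk_to_clone p'
        refine ⟨SimpleGraph.Walk.cons ?_ q, ?_⟩
        · exact Or.inr h.symm
        · rw [SimpleGraph.Walk.length_cons] at hp
          show q.length + 1 ≤ 3
          have h2 : p'.length ≤ 2 := by omega
          have := hq.trans (max_le (by omega) h2)
          omega

/-- Projection of the LT graph back to the base. -/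
def pr : V ⊕ V → V := Sum.elim id id

lemma exists_walk_pr {H : SimpleGraph V} {u v : V ⊕ V} (q : (LTstep H).Walk u v) :
    ∃ p : H.Walk (pr u) (pr v), p.length ≤ q.length := by
  induction q with
  | nil => exact ⟨SimpleGraph.Walk.nil, le_refl 0⟩
  | @cons u w v h q ih =>
    obtain ⟨p, hp⟩ := ih
    rw [SimpleGraph.Walk.length_cons]
    rcases u with a | a <;> rcases w with b | b
    · exact ⟨SimpleGraph.Walk.cons h p, by show p.length + 1 ≤ _; omega⟩
    · have h' : a = b ∨ H.Adj a b := h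
      rcases h' with rfl | h'
      · exact ⟨p, hp.trans (Nat.le_succ _)⟩
      · exact ⟨SimpleGraph.Walk.cons h' p, by show p.length + 1 ≤ _; omega⟩
    · have h' : b = a ∨ H.Adj b a := h
      rcases h' with rfl | h'
      · exact ⟨p, hp.trans (Nat.le_succ _)⟩
      · exact ⟨SimpleGraph.Walk.cons h'.symm p, by show p.length + 1 ≤ _; omega⟩
    · exact (h : False).elim

lemma LT_lower {H : SimpleGraph V} (hp : ∃ u v : V, 3 ≤ H.edist u v) :
    ∃ u v : V ⊕ V, 3 ≤ (LTstep H).edist u v := by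
  obtain ⟨u, v, huv⟩ := hp
  refine ⟨Sum.inl u, Sum.inl v, ?_⟩
  rw [SimpleGraph.edist_eq_sInf]
  apply le_sInf
  rintro b ⟨q, rfl⟩
  obtain ⟨p, hpq⟩ := exists_walk_pr q
  calc (3 : ℕ∞) ≤ H.edist u v := huv
    _ ≤ p.length := SimpleGraph.edist_le p
    _ ≤ q.length := by exact_mod_cast hpq

/-- Map of connected components. -/
def compMap (H : SimpleGraph V) : H.ConnectedComponent → (LTstep H).ConnectedComponent :=
  SimpleGraph.ConnectedComponent.lift (fun v => (LTstep H).connectedComponentMk (Sum.inl v))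
    (fun v w p _ =>
      SimpleGraph.ConnectedComponent.sound (SimpleGraph.Reachable.map (inlHom H) p.reachable))

lemma compMap_bij (H : SimpleGraph V) : Function.Bijective (compMap H) := by
  constructor
  · intro c d h
    obtain ⟨u, rfl⟩ := Quot.exists_rep c
    obtain ⟨v, rfl⟩ := Quot.exists_rep d
    have h' : (LTstep H).connectedComponentMk (Sum.inl u)
        = (LTstep H).connectedComponentMk (Sum.inl v) := h
    obtain ⟨q⟩ := SimpleGraph.ConnectedComponent.exact h'
    obtain ⟨p, _⟩ := exists_walk_pr q
    exact SimpleGraph.ConnectedComponent.sound ⟨p⟩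
  · intro c
    obtain ⟨w, rfl⟩ := Quot.exists_rep c
    rcases w with a | x
    · exact ⟨H.connectedComponentMk a, rfl⟩
    · refine ⟨H.connectedComponentMk x, ?_⟩
      refine SimpleGraph.ConnectedComponent.sound
        ⟨SimpleGraph.Walk.cons ?_ SimpleGraph.Walk.nil⟩
      exact Or.inl rfl

/-- LT preserves "not being a disjoint union of two complete graphs". -/
lemma LT_not_two_cliques {H : SimpleGraph V}
    (hG : ¬ (Nat.card H.ConnectedComponent = 2 ∧
      ∀ u v : V, H.Reachable u v → u = v ∨ H.Adj u v)) :
    ¬ (Nat.card (LTstep H).ConnectedComponent = 2 ∧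
      ∀ u v : V ⊕ V, (LTstep H).Reachable u v → u = v ∨ (LTstep H).Adj u v) := by
  rintro ⟨hcard, hcl⟩
  apply hG
  constructor
  · exact (Nat.card_eq_of_bijective _ (compMap_bij H)).trans hcard
  · intro u v h
    rcases hcl (Sum.inl u) (Sum.inl v) (SimpleGraph.Reachable.map (inlHom H) h) with h' | h'
    · exact Or.inl (Sum.inl.inj h')
    · exact Or.inr h'

/-- Nontriviality of ILM vertex types. -/
lemma ILMVertex_nontrivial {V : Type} (hnt : Nontrivial V) : ∀ t, Nontrivial (ILMVertex V t)
  | 0 => hnt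
  | t + 1 => by
    obtain ⟨a, b, hab⟩ := ILMVertex_nontrivial hnt t
    exact ⟨Sum.inl a, Sum.inl b, fun h => hab (Sum.inl.inj h)⟩

end ILMAux

/-- If `G` has at least two vertices and is not the disjoint union of
two complete graphs, and `τ` is the second index with `s_τ = 0`, then for all
`t ≥ τ + 1` the graph `ILM^t(S,G)` is connected with diameter exactly `3`. -/

theorem ILM_diameter_eq_three {V : Type} [Fintype V] (G : SimpleGraph V)
    (hcard : 2 ≤ Fintype.card V)
    (hG : ¬ (Nat.card G.ConnectedComponent = 2 ∧
      ∀ u v : V, G.Reachable u v → u = v ∨ G.Adj u v))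
    (S : ℕ → Bool) (τ₁ τ : ℕ) (hlt : τ₁ < τ) (hτ₁ : S τ₁ = false) (hτ : S τ = false)
    (hsecond : ∀ i < τ, i ≠ τ₁ → S i = true)
    (t : ℕ) (ht : τ + 1 ≤ t) :
    (ILM S G t).Connected ∧ (ILM S G t).ediam = 3 := by
  classical
  have hnt0 : Nontrivial V := Fintype.one_lt_card_iff_nontrivial.mp hcard
  have hnt : ∀ n, Nontrivial (ILMVertex V n) := ILMAux.ILMVertex_nontrivial hnt0
  have hILM : ∀ n, ILM S G (n+1) = if S n then LTstep (ILM S G n) else LATstep (ILM S G n) :=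
    fun _ => rfl
  have hLATeq : ∀ n, S n = false → ILM S G (n+1) = LATstep (ILM S G n) := by
    intro n hn
    rw [hILM n, hn]
    simp
    rfl
  have hLTeq : ∀ n, S n = true → ILM S G (n+1) = LTstep (ILM S G n) := by
    intro n hn
    rw [hILM n, hn]
    simp
    rfl
  -- Stage 1: up to τ₁ the graph is never a disjoint union of two cliques
  have h1 : ∀ i, i ≤ τ₁ → ¬ (Nat.card (ILM S G i).ConnectedComponent = 2 ∧
      ∀ u v, (ILM S G i).Reachable u v → u = v ∨ (ILM S G i).Adj u v) := by
    intro i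
    induction i with
    | zero => intro _; exact hG
    | succ n ih =>
      intro hn
      have hSn : S n = true := hsecond n (by omega) (by omega)
      rw [hLTeq n hSn]
      exact ILMAux.LT_not_two_cliques (ih (by omega))
  -- Stage 2: the invariant holds at time τ₁ + 1
  have h2 : ILMAux.W (ILM S G (τ₁ + 1)) := by
    rw [hLATeq τ₁ hτ₁]
    exact ILMAux.W_LAT_base _ (hnt τ₁) (h1 τ₁ le_rfl)
  -- Stage 3: the invariant holds at all times in [τ₁+1, τ]
  have h3 : ∀ i, τ₁ + 1 ≤ i → i ≤ τ → ILMAux.W (ILM S G i) := by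
    intro i
    induction i with
    | zero => intro h _; exact absurd h (by omega)
    | succ n ih =>
      intro hge hle
      by_cases hn : n < τ₁ + 1
      · have hn' : n = τ₁ := by omega
        subst hn'
        exact h2
      · have hSn : S n = true := hsecond n (by omega) (by omega)
        rw [hLTeq n hSn]
        exact ILMAux.W.LT (ih (by omega) (by omega))
  -- Stage 4: main induction beyond τ + 1
  have key : ∀ n, τ + 1 ≤ n →
      (∀ u v : ILMVertex V n, ∃ p : (ILM S G n).Walk u v, p.length ≤ 3) ∧
      (∃ u v : ILMVertex V n, 3 ≤ (ILM S G n).edist u v) ∧ ILMAux.W (ILM S G n) := by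
    intro n
    induction n with
    | zero => intro h; exact absurd h (by omega)
    | succ m ih =>
      intro hm
      by_cases hτm : τ + 1 ≤ m
      · obtain ⟨hwalk, hpair, hW⟩ := ih hτm
        cases hSm : S m with
        | false =>
          rw [hLATeq m hSm]
          obtain ⟨a⟩ : Nonempty (ILMVertex V m) := (hnt m).to_nonempty
          exact ⟨ILMAux.exists_LAT_walk hW, ⟨Sum.inl a, Sum.inr a, ILMAux.LAT_pair _ a⟩,
            ILMAux.W.LAT hW⟩
        | true =>
          rw [hLTeq m hSm]
          exact ⟨ILMAux.exists_LT_walk hwalk, ILMAux.LT_lower hpair, ILMAux.W.LT hW⟩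
      · have hmτ : m = τ := by omega
        subst hmτ
        have hW : ILMAux.W (ILM S G m) := h3 m (by omega) le_rfl
        rw [hLATeq m hτ]
        obtain ⟨a⟩ : Nonempty (ILMVertex V m) := (hnt m).to_nonempty
        exact ⟨ILMAux.exists_LAT_walk hW, ⟨Sum.inl a, Sum.inr a, ILMAux.LAT_pair _ a⟩,
          ILMAux.W.LAT hW⟩
  obtain ⟨hwalk, hpair, _⟩ := key t ht
  constructor
  · haveI : Nonempty (ILMVertex V t) := (hnt t).to_nonempty
    exact ⟨fun u v => ⟨(hwalk u v).choose⟩⟩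
  · apply le_antisymm
    · apply SimpleGraph.ediam_le_of_edist_le
      intro u v
      obtain ⟨p, hp⟩ := hwalk u v
      exact (SimpleGraph.edist_le p).trans (by exact_mod_cast hp)
    · obtain ⟨u, v, huv⟩ := hpair
      exact le_trans huv SimpleGraph.edist_le_ediam
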